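/- arXiv:2005.03949 — 3 statements merged into one kernel-verified Lean document; each statement's English description precedes it below -/
import Mathlib

section
/- Let G be an n×m matrix whose entries G_ij are rational functions over ℂ, each written as num(G_ij)/denom(G_ij) with coprime polynomials, and let s_p ∈ ℂ be a pole of G. Let n_ij be the multiplicity of s_p as a root of denom(G_ij) (so n_ij = 0 if denom(G_ij)(s_p) ≠ 0), and let n_p = max_{i,j} n_ij ≥ 1. Let A ∈ ℂ^{n×m} be the matrix whose (i,j) entry is the limit of (s − s_p)^{n_p} · G_ij(s) as s → s_p (this entry is 0 whenever n_ij < n_p). Then A ≠ 0, and |s − s_p|^{n_p} · σ̄(G(s)) tends to ‖A‖ > 0 as s tends to s_p through points that are not poles of G. In other words, σ̄(G(s)) ≈ a / |s − s_p|^{n_p} near s_p with a = ‖A‖ > 0. -/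
/-!
Take an entry `G i j` whose denominator has the maximal multiplicity `n_p` at `s_p` and write that
denominator as `(X - s_p)^n_p * q` with `q(s_p) ≠ 0`. Then `(s - s_p)^n_p * G i j (s)` equals
`num(s) / q(s)` off `s_p`, which tends to `num(s_p) / q(s_p)`, and this is nonzero because `num` and
the denominator are coprime while the denominator vanishes at `s_p`; poles being isolated, the limit
is unique, so `A i j ≠ 0`. Finally `σ̄` is the `L²` operator norm, hence continuous and absolutely
homogeneous: `|s - s_p|^n_p * σ̄(G(s)) = σ̄((s - s_p)^n_p • G(s)) → σ̄(A) > 0`.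
-/

open Polynomial Filter Topology Matrix

/-- The largest singular value `σ̄(M)` of a complex `n × m` matrix, i.e. its operator norm
as a linear map `(ℂ^m, ‖·‖₂) → (ℂ^n, ‖·‖₂)`. -/
noncomputable def sigmaMax {n m : ℕ} (M : Matrix (Fin n) (Fin m) ℂ) : ℝ :=
  ‖LinearMap.toContinuousLinearMap (Matrix.toEuclideanLin M)‖

/-- Entrywise evaluation of a matrix of rational functions at a point `s : ℂ`. -/
noncomputable def evalMat {n m : ℕ} (G : Matrix (Fin n) (Fin m) (RatFunc ℂ)) (s : ℂ) :
    Matrix (Fin n) (Fin m) ℂ :=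
  fun i j => (G i j).eval (RingHom.id ℂ) s

/-- `s` is a pole of the rational matrix `G` if the denominator (in coprime
numerator/denominator form) of at least one entry vanishes at `s` (Definition 1). -/
def IsPole {n m : ℕ} (G : Matrix (Fin n) (Fin m) (RatFunc ℂ)) (s : ℂ) : Prop :=
  ∃ i j, (G i j).denom.eval s = 0

open scoped Matrix.Norms.L2Operator

theorem sigmaMax_eq_l2_opNorm {n m : ℕ} (M : Matrix (Fin n) (Fin m) ℂ) : sigmaMax M = ‖M‖ := rfl

namespace RatFunc

variable {K : Type*} [NormedField K]

/-- The leading coefficient of the Laurent expansion of `f` at `a`. -/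
noncomputable def poleCoeff (f : RatFunc K) (a : K) : K :=
  f.num.eval a / (f.denom /ₘ (Polynomial.X - Polynomial.C a) ^ f.denom.rootMultiplicity a).eval a

theorem tendsto_sub_pow_rootMultiplicity_mul_eval (f : RatFunc K) (a : K) :
    Tendsto (fun s => (s - a) ^ f.denom.rootMultiplicity a * f.eval (RingHom.id K) s) (𝓝[≠] a)
      (𝓝 (f.poleCoeff a)) := by
  set k := f.denom.rootMultiplicity a
  set q := f.denom /ₘ (Polynomial.X - Polynomial.C a) ^ k
  have hq : q.eval a ≠ 0 := eval_divByMonic_pow_rootMultiplicity_ne_zero a f.denom_ne_zero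
  -- valid also where `q.eval s = 0`: both sides are then `0`, as `x / 0 = 0`
  have hcancel : ∀ s ≠ a, f.num.eval s / q.eval s = (s - a) ^ k * f.eval (RingHom.id K) s := by
    intro s hs
    have hden : f.denom.eval s = (s - a) ^ k * q.eval s := by
      conv_lhs => rw [← pow_mul_divByMonic_rootMultiplicity_eq f.denom a]
      simp only [Polynomial.eval_mul, Polynomial.eval_pow, Polynomial.eval_sub, Polynomial.eval_X,
        Polynomial.eval_C, k, q]
    rw [RatFunc.eval, eval₂_id, eval₂_id, hden, ← mul_div_assoc,
      mul_div_mul_left _ _ (pow_ne_zero _ (sub_ne_zero.mpr hs))]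
  exact ((f.num.continuous.tendsto a).div (q.continuous.tendsto a) hq).mono_left
    nhdsWithin_le_nhds |>.congr' (eventually_nhdsWithin_of_forall hcancel)

theorem eval_num_ne_zero_of_isRoot_denom {f : RatFunc K} {a : K} (h : f.denom.IsRoot a) :
    f.num.eval a ≠ 0 := by
  have := aeval_ne_zero_of_isCoprime f.isCoprime_num_denom a
  simp only [coe_aeval_eq_eval] at this
  exact this.resolve_right (not_not.mpr h)

theorem poleCoeff_ne_zero_of_isRoot_denom {f : RatFunc K} {a : K} (h : f.denom.IsRoot a) :
    f.poleCoeff a ≠ 0 :=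
  div_ne_zero (eval_num_ne_zero_of_isRoot_denom h)
    (eval_divByMonic_pow_rootMultiplicity_ne_zero a f.denom_ne_zero)

end RatFunc

theorem finite_setOf_isPole {n m : ℕ} (G : Matrix (Fin n) (Fin m) (RatFunc ℂ)) :
    {s | IsPole G s}.Finite := by
  have : {s | IsPole G s} = ⋃ (i) (j), {s | (G i j).denom.IsRoot s} := by
    ext s; simp [IsPole]
  rw [this]
  exact Set.finite_iUnion fun i => Set.finite_iUnion fun j =>
    finite_setOfPred_isRoot (G i j).denom_ne_zero

theorem nhdsNE_le_nhdsWithin_not_isPole {n m : ℕ} (G : Matrix (Fin n) (Fin m) (RatFunc ℂ))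
    (a : ℂ) : 𝓝[≠] a ≤ 𝓝[{s | ¬ IsPole G s}] a :=
  nhdsWithin_le_of_mem <| mem_of_superset
    (nhdsNE_of_nhdsNE_sdiff_finite univ_mem (finite_setOf_isPole G)) fun _ hs => hs.2

/-- **Theorem 1 of the paper.** Let `s_p` be a pole of the rational matrix `G`,
let `n_ij` be the multiplicity of `s_p` as a root of the denominator of `G i j`,
`n_p = max n_ij ≥ 1`, and let `A` be the entrywise limit of `(s - s_p)^{n_p} • G(s)` at `s_p`.
Then `A ≠ 0` and `|s - s_p|^{n_p} * σ̄(G(s)) → ‖A‖ = σ̄(A) > 0` as `s → s_p` through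
non-poles of `G`; i.e. `σ̄(G(s)) ≈ a / |s - s_p|^{n_p}` with `a = ‖A‖ > 0`. -/
theorem sigmaMax_pole_approx {n m : ℕ} (G : Matrix (Fin n) (Fin m) (RatFunc ℂ)) (s_p : ℂ)
    (hpole : IsPole G s_p)
    (np : ℕ)
    (hnp : np = Finset.univ.sup
      (fun p : Fin n × Fin m => ((G p.1 p.2).denom).rootMultiplicity s_p))
    (A : Matrix (Fin n) (Fin m) ℂ)
    (hA : ∀ i j, Filter.Tendsto
      (fun s : ℂ => (s - s_p) ^ np * ((G i j).eval (RingHom.id ℂ) s))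
      (nhdsWithin s_p {s : ℂ | ¬ IsPole G s}) (nhds (A i j))) :
    1 ≤ np ∧
    A ≠ 0 ∧
    Filter.Tendsto (fun s : ℂ => ‖s - s_p‖ ^ np * sigmaMax (evalMat G s))
      (nhdsWithin s_p {s : ℂ | ¬ IsPole G s}) (nhds (sigmaMax A)) ∧
    0 < sigmaMax A := by
  obtain ⟨i₀, j₀, hi₀j₀⟩ := hpole
  obtain ⟨⟨i, j⟩, -, hij⟩ := Finset.exists_mem_eq_sup Finset.univ ⟨(i₀, j₀), Finset.mem_univ _⟩
    fun p : Fin n × Fin m => ((G p.1 p.2).denom).rootMultiplicity s_p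
  have hnp_pos : 1 ≤ np := hnp ▸ Finset.le_sup_of_le (Finset.mem_univ (i₀, j₀))
    ((rootMultiplicity_pos (G i₀ j₀).denom_ne_zero).2 hi₀j₀)
  have hij_np : (G i j).denom.rootMultiplicity s_p = np := (hnp.trans hij).symm
  have hij_root : (G i j).denom.IsRoot s_p :=
    (rootMultiplicity_pos (G i j).denom_ne_zero).1 (hij_np ▸ hnp_pos)
  have : (𝓝[{s | ¬ IsPole G s}] s_p).NeBot := neBot_of_le (nhdsNE_le_nhdsWithin_not_isPole G s_p)
  have hA_ij : A i j = (G i j).poleCoeff s_p := by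
    refine tendsto_nhds_unique (hA i j) ?_
    rw [← hij_np]
    exact ((G i j).tendsto_sub_pow_rootMultiplicity_mul_eval s_p).mono_left
      (nhdsWithin_mono _ fun s hs h => hs (h ▸ ⟨i₀, j₀, hi₀j₀⟩))
  have hA_ne : A ≠ 0 := fun h => (G i j).poleCoeff_ne_zero_of_isRoot_denom hij_root
    (by rw [← hA_ij, h]; rfl)
  have hlim : Tendsto (fun s => (s - s_p) ^ np • evalMat G s) (𝓝[{s | ¬ IsPole G s}] s_p) (𝓝 A) :=
    tendsto_pi_nhds.2 fun i => tendsto_pi_nhds.2 (hA i)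
  simp only [sigmaMax_eq_l2_opNorm]
  refine ⟨hnp_pos, hA_ne, hlim.norm.congr fun s => ?_, norm_pos_iff.2 hA_ne⟩
  rw [norm_smul, norm_pow]
end

section
/- Let G be an n×m matrix whose entries are rational functions over ℂ, and let s_p ∈ ℂ be a pole of G. Then σ̄(G(s)) tends to +∞ as s tends to s_p through points that are not poles of G. -/
open Polynomial Filter Topology Matrix

/-! At a root `a` of the denominator `q` of an entry `f = p / q`, coprimality forces
`p a ≠ 0`, so `‖f s‖ = ‖p s‖ * ‖(q s)⁻¹‖ → ∞` as `s → a`. Every entry of a matrix is bounded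
by its spectral norm, since `A i j` is a coordinate of the image `A eⱼ` of a unit vector. -/

theorem Matrix.norm_entry_le_opNorm_toEuclideanLin {𝕜 : Type*} [RCLike 𝕜] {m n : Type*}
    [Fintype m] [Fintype n] [DecidableEq n] (A : Matrix m n 𝕜) (i : m) (j : n) :
    ‖A i j‖ ≤ ‖LinearMap.toContinuousLinearMap (toEuclideanLin A)‖ := by
  set L := LinearMap.toContinuousLinearMap (toEuclideanLin A)
  have hcol : L (EuclideanSpace.single j 1) i = A i j := by
    simp [L, toEuclideanLin]
  calc ‖A i j‖ = ‖L (EuclideanSpace.single j 1) i‖ := by rw [hcol]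
    _ ≤ ‖L (EuclideanSpace.single j 1)‖ := PiLp.norm_apply_le _ i
    _ ≤ ‖L‖ := by simpa using L.le_opNorm (EuclideanSpace.single j (1 : 𝕜))

theorem Polynomial.eval_ne_zero_of_isCoprime_of_eval_eq_zero {R : Type*} [CommRing R]
    [Nontrivial R] {p q : R[X]} (h : IsCoprime p q) {a : R} (hq : q.eval a = 0) : p.eval a ≠ 0 := by
  simpa [hq] using aeval_ne_zero_of_isCoprime h a

theorem RatFunc.tendsto_norm_eval_atTop_of_denom_eval_eq_zero {K : Type*} [NormedField K]
    (f : RatFunc K) {a : K} (ha : f.denom.eval a = 0) :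
    Tendsto (fun s => ‖f.eval (RingHom.id K) s‖) (𝓝[{s | f.denom.eval s ≠ 0}] a) atTop := by
  have hnum : f.num.eval a ≠ 0 :=
    eval_ne_zero_of_isCoprime_of_eval_eq_zero f.isCoprime_num_denom ha
  have hdenom :
      Tendsto (fun s => f.denom.eval s) (𝓝[{s | f.denom.eval s ≠ 0}] a) (𝓝[≠] 0) :=
    tendsto_nhdsWithin_of_tendsto_nhds_of_eventually_within _
      (ha ▸ f.denom.continuous.continuousWithinAt.tendsto) self_mem_nhdsWithin
  have hinv := tendsto_norm_inv_nhdsNE_zero_atTop.comp hdenom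
  have hnum_norm : Tendsto (fun s => ‖f.num.eval s‖) (𝓝[{s | f.denom.eval s ≠ 0}] a)
      (𝓝 ‖f.num.eval a‖) :=
    f.num.continuous.norm.continuousWithinAt.tendsto
  refine (hnum_norm.pos_mul_atTop (norm_pos_iff.2 hnum) hinv).congr fun s => ?_
  simp [RatFunc.eval, div_eq_mul_inv]

/-- **blow-up part of Corollary 1.** If `s_p` is a pole of the rational
matrix `G`, then `σ̄(G(s)) → +∞` as `s → s_p` through points that are not poles of `G`. -/
theorem sigmaMax_tendsto_atTop_of_pole {n m : ℕ} (G : Matrix (Fin n) (Fin m) (RatFunc ℂ))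
    (s_p : ℂ) (hpole : IsPole G s_p) :
    Filter.Tendsto (fun s : ℂ => sigmaMax (evalMat G s))
      (nhdsWithin s_p {s : ℂ | ¬ IsPole G s}) Filter.atTop := by
  obtain ⟨i, j, hpole⟩ := hpole
  have hentry := (G i j).tendsto_norm_eval_atTop_of_denom_eval_eq_zero hpole
  refine tendsto_atTop_mono (fun s => ?_) (hentry.mono_left (nhdsWithin_mono _ ?_))
  · exact (evalMat G s).norm_entry_le_opNorm_toEuclideanLin i j
  · exact fun s hs hs' => hs ⟨i, j, hs'⟩
end

section
/- Let G be an n×m matrix whose entries are proper rational functions over ℂ, let s_p = σ_p + iω_p be a pole of G, and let r > 0 be such that s_p is the only pole of G whose real part lies in the interval [σ_p − r, σ_p + r]. Then for every ε with 0 < ε < r there exists δ with 0 < δ ≤ ε such that for every Δ ∈ ℝ with 0 < |Δ − σ_p| < δ: sup { σ̄(G(Δ + iω)) : ω ∈ ℝ, |Δ + iω − s_p| < ε } > sup { σ̄(G(Δ + iω)) : ω ∈ ℝ, |Δ + iω − s_p| ≥ ε }. That is, when the vertical line γ_Δ(ω) = Δ + iω is sufficiently close to the pole s_p, the supremum of the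 largest singular value along the line is attained in the ε-neighborhood of s_p. -/
open Polynomial Filter Topology Matrix

/-!
Off the pole `s_p`, every point of the closed strip `|Re s - σ_p| ≤ ε` is a regular point of `G`,
and proper entries stay bounded at infinity, so `σ̄(G(s))` is bounded by some `M` on the part of
the strip at distance `≥ ε` from `s_p`. On the other hand `σ̄` dominates the modulus of each entry,
and the entry whose denominator vanishes at `s_p` has a numerator that does not (coprimality), so
`σ̄(G(Δ + iω_p)) → ∞` as `Δ → σ_p`. For `Δ` close enough to `σ_p` the value at `Δ + iω_p`, which
lies inside the `ε`-neighbourhood, therefore exceeds `M`.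
-/

open Bornology

lemma bddAbove_image_of_eventually_le_cobounded {X : Type*} [PseudoMetricSpace X]
    [ProperSpace X] {f : X → ℝ} {S : Set X} (hS : IsClosed S) (hf : ContinuousOn f S) {C : ℝ}
    (hC : ∀ᶠ x in cobounded X, f x ≤ C) : BddAbove (f '' S) := by
  have hK : IsCompact (S ∩ closure {x | f x ≤ C}ᶜ) :=
    (isBounded_compl_iff.2 hC).isCompact_closure.inter_left hS
  refine ((hK.bddAbove_image (hf.mono Set.inter_subset_left)).union (bddAbove_Iic (a := C))).mono ?_
  rintro _ ⟨x, hx, rfl⟩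
  by_cases h : f x ≤ C
  · exact Or.inr h
  · exact Or.inl ⟨x, ⟨hx, subset_closure h⟩, rfl⟩

namespace RatFunc

variable {K : Type*} [NormedField K] (f : RatFunc K)

lemma eval_id (x : K) : f.eval (RingHom.id K) x = f.num.eval x / f.denom.eval x := rfl

lemma continuousAt_eval {x : K} (hx : f.denom.eval x ≠ 0) :
    ContinuousAt (fun y => f.eval (RingHom.id K) y) x := by
  simp only [eval_id]
  exact f.num.continuousAt.div f.denom.continuousAt hx

lemma exists_eventually_norm_eval_le (hf : f.num.degree ≤ f.denom.degree) :
    ∃ C, ∀ᶠ x in cobounded K, ‖f.eval (RingHom.id K) x‖ ≤ C := by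
  obtain ⟨c, hc0, hc⟩ := (isBigO_cobounded_of_degree_le hf).exists_nonneg
  refine ⟨c, hc.bound.mono fun x hx => ?_⟩
  rw [eval_id, norm_div]
  exact div_le_of_le_mul₀ (norm_nonneg _) hc0 hx

lemma tendsto_norm_eval_atTop {x₀ : K} (h : f.denom.eval x₀ = 0) :
    Tendsto (fun x => ‖f.eval (RingHom.id K) x‖) (𝓝[{x | f.denom.eval x ≠ 0}] x₀) atTop := by
  have hnum : f.num.eval x₀ ≠ 0 := by
    simpa [h] using aeval_ne_zero_of_isCoprime f.isCoprime_num_denom x₀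
  have hdenom : Tendsto (fun x => ‖f.denom.eval x‖) (𝓝[{x | f.denom.eval x ≠ 0}] x₀) (𝓝[>] 0) :=
    tendsto_nhdsWithin_iff.2
      ⟨by simpa [h] using (f.denom.continuous.tendsto x₀).norm.mono_left nhdsWithin_le_nhds,
        eventually_nhdsWithin_of_forall fun x hx => norm_pos_iff.2 hx⟩
  simp_rw [eval_id, norm_div, div_eq_mul_inv]
  exact Tendsto.pos_mul_atTop (norm_pos_iff.2 hnum)
    ((f.num.continuous.tendsto x₀).norm.mono_left nhdsWithin_le_nhds)
    (tendsto_inv_nhdsGT_zero.comp hdenom)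

end RatFunc

section SigmaMax

variable {n m : ℕ}

lemma norm_entry_le_sigmaMax (M : Matrix (Fin n) (Fin m) ℂ) (i : Fin n) (j : Fin m) :
    ‖M i j‖ ≤ sigmaMax M := by
  have h := (LinearMap.toContinuousLinearMap (Matrix.toEuclideanLin M)).le_opNorm
    (EuclideanSpace.single j (1 : ℂ))
  rw [PiLp.norm_single, norm_one, mul_one] at h
  refine le_trans (le_of_eq ?_) ((PiLp.norm_apply_le _ i).trans h)
  simp

open scoped Matrix.Norms.L2Operator in
lemma continuous_sigmaMax : Continuous (sigmaMax : Matrix (Fin n) (Fin m) ℂ → ℝ) :=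
  continuous_norm

lemma bddAbove_sigmaMax_of_norm_entry_le (B : Fin n → Fin m → ℝ) :
    BddAbove (sigmaMax '' {M | ∀ i j, ‖M i j‖ ≤ B i j}) := by
  have hK : IsCompact (Set.univ.pi fun i => Set.univ.pi fun j => Metric.closedBall 0 (B i j) :
      Set (Matrix (Fin n) (Fin m) ℂ)) :=
    isCompact_univ_pi fun i => isCompact_univ_pi fun j => isCompact_closedBall _ _
  refine (hK.bddAbove_image continuous_sigmaMax.continuousOn).mono (Set.image_mono ?_)
  exact fun M hM i _ j _ => mem_closedBall_zero_iff.2 (hM i j)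

end SigmaMax

section Poles

variable {n m : ℕ} (G : Matrix (Fin n) (Fin m) (RatFunc ℂ))

lemma continuousAt_sigmaMax_evalMat {s : ℂ} (hs : ¬IsPole G s) :
    ContinuousAt (fun s => sigmaMax (evalMat G s)) s :=
  continuous_sigmaMax.continuousAt.comp <| continuousAt_pi.2 fun i => continuousAt_pi.2 fun j =>
    (G i j).continuousAt_eval fun h => hs ⟨i, j, h⟩

lemma exists_eventually_sigmaMax_evalMat_le
    (hproper : ∀ i j, (G i j).num.degree ≤ (G i j).denom.degree) :
    ∃ C, ∀ᶠ s in cobounded ℂ, sigmaMax (evalMat G s) ≤ C := by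
  choose B hB using fun i j => (G i j).exists_eventually_norm_eval_le (hproper i j)
  obtain ⟨C, hC⟩ := bddAbove_sigmaMax_of_norm_entry_le B
  exact ⟨C, (eventually_all.2 fun i => eventually_all.2 fun j => hB i j).mono
    fun s hs => hC ⟨_, hs, rfl⟩⟩

lemma bddAbove_sigmaMax_evalMat (hproper : ∀ i j, (G i j).num.degree ≤ (G i j).denom.degree)
    {S : Set ℂ} (hS : IsClosed S) (hpoles : ∀ s ∈ S, ¬IsPole G s) :
    BddAbove ((fun s => sigmaMax (evalMat G s)) '' S) :=
  have ⟨_, hC⟩ := exists_eventually_sigmaMax_evalMat_le G hproper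
  bddAbove_image_of_eventually_le_cobounded hS
    (fun s hs => (continuousAt_sigmaMax_evalMat G (hpoles s hs)).continuousWithinAt) hC

lemma tendsto_sigmaMax_evalMat_atTop {s₀ : ℂ} (hpole : IsPole G s₀) :
    Tendsto (fun s => sigmaMax (evalMat G s)) (𝓝[{s | ¬IsPole G s}] s₀) atTop := by
  obtain ⟨i, j, h⟩ := hpole
  refine tendsto_atTop_mono (fun s => norm_entry_le_sigmaMax _ i j) ?_
  exact ((G i j).tendsto_norm_eval_atTop h).mono_left
    (nhdsWithin_mono _ fun s hs h0 => hs ⟨i, j, h0⟩)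

end Poles

section Lines

open Complex

variable {n m : ℕ} (G : Matrix (Fin n) (Fin m) (RatFunc ℂ))

lemma abs_sub_im_le_norm_add_mul_I_sub (x y : ℝ) (s : ℂ) : |y - s.im| ≤ ‖(x : ℂ) + y * I - s‖ := by
  simpa using abs_im_le_norm ((x : ℂ) + y * I - s)

lemma norm_add_mul_I_sub_add_mul_I (x a b : ℝ) : ‖(x : ℂ) + b * I - (a + b * I)‖ = |x - a| := by
  rw [add_sub_add_right_eq_sub, ← ofReal_sub, norm_real, Real.norm_eq_abs]

lemma add_mul_I_ne_add_mul_I {x a : ℝ} (h : x ≠ a) (y b : ℝ) : (x : ℂ) + y * I ≠ a + b * I :=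
  fun h' => h (by simpa using congrArg re h')

lemma tendsto_sigmaMax_evalMat_horizontal_atTop {σ ω : ℝ} (hpole : IsPole G (σ + ω * I))
    (hnear : ∀ᶠ x : ℝ in 𝓝[≠] σ, ¬IsPole G (x + ω * I)) :
    Tendsto (fun x : ℝ => sigmaMax (evalMat G (x + ω * I))) (𝓝[≠] σ) atTop :=
  (tendsto_sigmaMax_evalMat_atTop G hpole).comp <| tendsto_nhdsWithin_iff.2
    ⟨(Continuous.tendsto (by fun_prop) σ).mono_left nhdsWithin_le_nhds, hnear⟩

lemma bddAbove_sigmaMax_evalMat_vertical {x : ℝ} (hline : ∀ y : ℝ, ¬IsPole G (x + y * I))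
    (s : ℂ) (ε : ℝ) :
    BddAbove ((fun y : ℝ => sigmaMax (evalMat G (x + y * I))) ''
      {y | ‖(x : ℂ) + y * I - s‖ < ε}) := by
  have hf : Continuous fun y : ℝ => sigmaMax (evalMat G (x + y * I)) :=
    continuous_iff_continuousAt.2 fun y => (continuousAt_sigmaMax_evalMat G (hline y)).comp
      (f := fun y : ℝ => (x : ℂ) + y * I) (by fun_prop)
  exact ((isCompact_closedBall s.im ε).bddAbove_image hf.continuousOn).mono <| Set.image_mono
    fun y hy => (abs_sub_im_le_norm_add_mul_I_sub x y s).trans hy.le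

end Lines

theorem sup_sigmaMax_attained_near_pole_general {n m : ℕ}
    (G : Matrix (Fin n) (Fin m) (RatFunc ℂ))
    (hproper : ∀ i j, (G i j).num.degree ≤ (G i j).denom.degree)
    (σ_p ω_p : ℝ) (s_p : ℂ) (hs : s_p = (σ_p : ℂ) + ω_p * Complex.I)
    (hpole : IsPole G s_p) (r : ℝ)
    (honly : ∀ s : ℂ, IsPole G s → s.re ∈ Set.Icc (σ_p - r) (σ_p + r) → s = s_p) :
    ∀ ε : ℝ, 0 < ε → ε < r → ∃ δ : ℝ, 0 < δ ∧ δ ≤ ε ∧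
      ∀ Δ : ℝ, 0 < |Δ - σ_p| → |Δ - σ_p| < δ →
        sSup ((fun ω : ℝ => sigmaMax (evalMat G ((Δ : ℂ) + ω * Complex.I))) ''
            {ω : ℝ | ‖(Δ : ℂ) + ω * Complex.I - s_p‖ < ε}) >
        sSup ((fun ω : ℝ => sigmaMax (evalMat G ((Δ : ℂ) + ω * Complex.I))) ''
            {ω : ℝ | ε ≤ ‖(Δ : ℂ) + ω * Complex.I - s_p‖}) := by
  subst hs
  intro ε hε hεr
  have hnopole : ∀ s : ℂ, |s.re - σ_p| ≤ ε → s ≠ σ_p + ω_p * Complex.I → ¬IsPole G s :=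
    fun s hre hne hs => hne <| honly s hs <| Set.mem_Icc_iff_abs_le.1 <| by
      rw [abs_sub_comm]; linarith
  have hline : ∀ Δ : ℝ, |Δ - σ_p| ≤ ε → Δ ≠ σ_p → ∀ ω : ℝ, ¬IsPole G (Δ + ω * Complex.I) :=
    fun Δ hΔε hΔne ω => hnopole _ (by simpa using hΔε) (add_mul_I_ne_add_mul_I hΔne ω ω_p)
  obtain ⟨M, hM⟩ := bddAbove_sigmaMax_evalMat G hproper
    (S := {s | |s.re - σ_p| ≤ ε} ∩ {s | ε ≤ ‖s - (σ_p + ω_p * Complex.I)‖})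
    ((isClosed_le (by fun_prop) continuous_const).inter
      (isClosed_le continuous_const (by fun_prop)))
    (fun s hs => hnopole s hs.1 fun h => hε.not_ge (by simpa [h] using hs.2))
  have hnear : ∀ᶠ Δ : ℝ in 𝓝[≠] σ_p, ¬IsPole G (Δ + ω_p * Complex.I) := by
    filter_upwards [self_mem_nhdsWithin, nhdsWithin_le_nhds (Metric.closedBall_mem_nhds σ_p hε)]
      with Δ hΔne hΔε
    exact hline Δ (by simpa [Real.dist_eq] using hΔε) hΔne ω_p
  obtain ⟨δ, hδ, hbig⟩ := Metric.eventually_nhds_iff.1 <| eventually_nhdsWithin_iff.1 <|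
    (tendsto_sigmaMax_evalMat_horizontal_atTop G hpole hnear).eventually_gt_atTop (max M 0)
  refine ⟨min δ ε, lt_min hδ hε, min_le_right _ _, fun Δ hΔ0 hΔ => ?_⟩
  have hΔne : Δ ≠ σ_p := sub_ne_zero.1 (abs_pos.1 hΔ0)
  have hΔε : |Δ - σ_p| < ε := hΔ.trans_le (min_le_right _ _)
  -- `max M 0`: `Real.sSup_le` needs a nonnegative bound, as `sSup ∅ = 0`.
  calc _ ≤ max M 0 := Real.sSup_le (by
          rintro _ ⟨ω, hω, rfl⟩
          exact (hM ⟨_, ⟨by simpa using hΔε.le, hω⟩, rfl⟩).trans (le_max_left _ _))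
          (le_max_right _ _)
    _ < sigmaMax (evalMat G (Δ + ω_p * Complex.I)) :=
        hbig (hΔ.trans_le (min_le_left _ _)) hΔne
    _ ≤ _ := le_csSup (bddAbove_sigmaMax_evalMat_vertical G (hline Δ hΔε.le hΔne) _ ε)
        ⟨ω_p, (norm_add_mul_I_sub_add_mul_I Δ σ_p ω_p).trans_lt hΔε, rfl⟩

/-- **Corollary 1 of the paper.** Let `G` have proper rational entries,
let `s_p = σ_p + iω_p` be a pole of `G`, and let `r > 0` be such that `s_p` is the only
pole of `G` with real part in `[σ_p - r, σ_p + r]`. Then for every `0 < ε < r` there is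
`0 < δ ≤ ε` such that for every `Δ` with `0 < |Δ - σ_p| < δ`, the supremum of
`σ̄(G(Δ + iω))` over the part of the vertical line inside the `ε`-neighborhood of `s_p`
exceeds its supremum over the part outside that neighborhood: the maximum of the largest
singular value along the line `γ_Δ` is attained near `s_p`. -/
theorem sup_sigmaMax_attained_near_pole {n m : ℕ}
    (G : Matrix (Fin n) (Fin m) (RatFunc ℂ))
    (hproper : ∀ i j, (G i j).num.degree ≤ (G i j).denom.degree)
    (σ_p ω_p : ℝ) (s_p : ℂ) (hs : s_p = (σ_p : ℂ) + ω_p * Complex.I)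
    (hpole : IsPole G s_p) (r : ℝ) (hr : 0 < r)
    (honly : ∀ s : ℂ, IsPole G s → s.re ∈ Set.Icc (σ_p - r) (σ_p + r) → s = s_p) :
    ∀ ε : ℝ, 0 < ε → ε < r → ∃ δ : ℝ, 0 < δ ∧ δ ≤ ε ∧
      ∀ Δ : ℝ, 0 < |Δ - σ_p| → |Δ - σ_p| < δ →
        sSup ((fun ω : ℝ => sigmaMax (evalMat G ((Δ : ℂ) + ω * Complex.I))) ''
            {ω : ℝ | ‖(Δ : ℂ) + ω * Complex.I - s_p‖ < ε}) >
        sSup ((fun ω : ℝ => sigmaMax (evalMat G ((Δ : ℂ) + ω * Complex.I))) ''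
            {ω : ℝ | ε ≤ ‖(Δ : ℂ) + ω * Complex.I - s_p‖}) :=
  sup_sigmaMax_attained_near_pole_general G hproper σ_p ω_p s_p hs hpole r honly
end
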